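/- arXiv:1806.07335 — 2 statements merged into one kernel-verified Lean document; each statement's English description precedes it below -/
import Mathlib

section
/- There exist δ* > 0 and a pair of smooth functions (Γ₁, Γ₂) : [0, δ*] × ℝ → ℝ² such that Γᵢ(s, t + 2π) = Γᵢ(s, t) for all (s, t) and i = 1, 2, the identity (1 + ∂ₜΓ₁(s,t))² + (∂ₜΓ₂(s,t))² = 1 + s² holds for all (s, t), and for every integer k ≥ 0 there is a constant C(k) such that |∂ₛ∂ₜᵏΓ₁(s,t)| + |∂ₜᵏΓ₁(s,t)| + |∂ₜᵏΓ₂(s,t)| ≤ C(k) s for all (s, t) ∈ [0, δ*] × ℝ. -/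
open scoped ContDiff
open Set

noncomputable section

open Real Function

/-!
With `u = √(1 + s²)` take `Γ₁ = (u - 1) sin (2t) / 2`. Since `cos 2t = 1 - 2 sin² t`,
`u² - (1 + ∂ₜΓ₁)² = 4 (u - 1) sin² t (1 + (u - 1) cos² t)`, which is the square of
`2 w sin t √(1 + w² cos² t)` for `w = s / √(u + 1)`, a smooth square root of `u - 1`. That function
is `∂ₜ` of `-A (w cos t)`, where `A' = 2 √(1 + x²)`, so `Γ₂ = A w - A (w cos t)` is `2π`-periodic
and vanishes at `s = 0`.

For the estimates: each of `∂ₜᵏΓ₁`, `∂ₜᵏΓ₂`, `∂ₛ∂ₜᵏΓ₁` is smooth, `2π`-periodic in `t` and zero at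
`s = 0` (the last because `Γ₁` is even in `s`), so the mean value theorem in `s`, with `∂ₛ` bounded
on the compact set `[0, δ] × [0, 2π]`, bounds it by `C s`.
-/

section PartialDerivatives

variable {f : ℝ → ℝ → ℝ}

theorem ContDiff.uncurry_deriv_right {m n : WithTop ℕ∞} (hf : ContDiff ℝ m (uncurry f))
    (hmn : n + 1 ≤ m) : ContDiff ℝ n (uncurry fun s t => deriv (f s) t) :=
  ((hf.comp (contDiff_fst.fst.prodMk contDiff_snd)).fderiv (f := fun p : ℝ × ℝ => f p.1)
    contDiff_snd hmn).clm_apply contDiff_const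

theorem ContDiff.uncurry_deriv_left {m n : WithTop ℕ∞} (hf : ContDiff ℝ m (uncurry f))
    (hmn : n + 1 ≤ m) : ContDiff ℝ n (uncurry fun s t => deriv (fun s' => f s' t) s) := by
  have hswap {k : WithTop ℕ∞} : ContDiff ℝ k fun p : ℝ × ℝ => (p.2, p.1) :=
    contDiff_snd.prodMk contDiff_fst
  exact ((hf.comp hswap).uncurry_deriv_right (f := flip f) hmn).comp hswap

theorem ContDiff.uncurry_iteratedDeriv_right (hf : ContDiff ℝ ∞ (uncurry f)) (k : ℕ) :
    ContDiff ℝ ∞ (uncurry fun s t => iteratedDeriv k (f s) t) := by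
  induction k generalizing f with
  | zero => simpa using hf
  | succ k ih =>
    simp_rw [iteratedDeriv_succ']
    exact ih (hf.uncurry_deriv_right (by exact_mod_cast le_rfl))

theorem Function.Periodic.deriv {g : ℝ → ℝ} {c : ℝ} (h : Periodic g c) : Periodic (deriv g) c :=
  fun t => by rw [← deriv_comp_add_const, funext h]

theorem Function.Periodic.iteratedDeriv {g : ℝ → ℝ} {c : ℝ} (h : Periodic g c) (k : ℕ) :
    Periodic (iteratedDeriv k g) c := by
  rw [iteratedDeriv_eq_iterate]
  exact Nat.rec h (fun _ ih => by rw [Function.iterate_succ_apply']; exact ih.deriv) k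

theorem Function.Even.deriv_zero {g : ℝ → ℝ} (h : g.Even) : deriv g 0 = 0 := by
  have : deriv g 0 = -deriv g 0 := by
    simpa [funext h] using deriv_comp_neg (f := g) (x := 0)
  linarith

theorem exists_abs_le_mul_of_periodic_of_eq_zero (hf : ContDiff ℝ 1 (uncurry f)) {c : ℝ}
    (hc : 0 < c) (hper : ∀ s, Periodic (f s) c) (h0 : ∀ t, f 0 t = 0) (δ : ℝ) :
    ∃ C, 0 < C ∧ ∀ s ∈ Icc 0 δ, ∀ t, |f s t| ≤ C * s := by
  obtain ⟨M, hM⟩ := (isCompact_Icc.prod isCompact_Icc : IsCompact (Icc 0 δ ×ˢ Icc 0 c))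
    |>.exists_bound_of_continuousOn
      (hf.uncurry_deriv_left (n := 0) (by simp)).continuous.continuousOn
  refine ⟨max M 1, by positivity, ?_⟩
  rintro s ⟨hs0, hsδ⟩ t
  obtain ⟨t₀, ht₀, hft⟩ := Periodic.exists_mem_Ico₀ (f := fun t s => f s t)
    (fun t => funext fun s => hper s t) hc t
  have hdiff : Differentiable ℝ fun s' => f s' t₀ :=
    (hf.comp (contDiff_id.prodMk contDiff_const)).differentiable one_ne_zero
  have hmvt := norm_image_sub_le_of_norm_deriv_le_segment' (C := max M 1)
    (fun x _ => (hdiff x).hasDerivAt.hasDerivWithinAt)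
    (fun x hx => (hM (x, t₀) ⟨⟨hx.1, hx.2.le.trans hsδ⟩, Ico_subset_Icc_self ht₀⟩).trans
      (le_max_left _ _)) s ⟨hs0, le_rfl⟩
  rw [congrFun hft s]
  simpa [h0] using hmvt

theorem exists_abs_iteratedDeriv_le_mul (hf : ContDiff ℝ ∞ (uncurry f)) {c : ℝ} (hc : 0 < c)
    (hper : ∀ s, Periodic (f s) c) (h0 : f 0 = 0) (k : ℕ) (δ : ℝ) :
    ∃ C, 0 < C ∧ ∀ s ∈ Icc 0 δ, ∀ t, |iteratedDeriv k (f s) t| ≤ C * s :=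
  exists_abs_le_mul_of_periodic_of_eq_zero ((hf.uncurry_iteratedDeriv_right k).of_le (by simp)) hc
    (fun s => (hper s).iteratedDeriv k) (fun t => by simp [h0]) δ

theorem exists_abs_deriv_iteratedDeriv_le_mul (hf : ContDiff ℝ ∞ (uncurry f)) {c : ℝ}
    (hc : 0 < c) (hper : ∀ s, Periodic (f s) c) (heven : ∀ s, f (-s) = f s) (k : ℕ) (δ : ℝ) :
    ∃ C, 0 < C ∧ ∀ s ∈ Icc 0 δ, ∀ t, |deriv (fun s' => iteratedDeriv k (f s') t) s| ≤ C * s :=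
  exists_abs_le_mul_of_periodic_of_eq_zero
    ((hf.uncurry_iteratedDeriv_right k).uncurry_deriv_left (n := 1) (by norm_cast)) hc
    (fun s t => congrArg (deriv · s) (funext fun s' => (hper s').iteratedDeriv k t))
    (fun t => Even.deriv_zero fun s => by simp only [heven]) δ

end PartialDerivatives

namespace Corrugation

def speed (s : ℝ) : ℝ := √(1 + s ^ 2)

def amplitude (s : ℝ) : ℝ := s / √(speed s + 1)

def sqrtPrimitive (x : ℝ) : ℝ := x * √(1 + x ^ 2) + arsinh x

def Γ₁ (s t : ℝ) : ℝ := (speed s - 1) * (sin (2 * t) / 2)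

def Γ₂ (s t : ℝ) : ℝ := sqrtPrimitive (amplitude s) - sqrtPrimitive (amplitude s * cos t)

lemma one_add_sq_pos (x : ℝ) : 0 < 1 + x ^ 2 := by positivity

lemma speed_add_one_pos (s : ℝ) : 0 < speed s + 1 := by
  have := sqrt_nonneg (1 + s ^ 2); unfold speed; linarith

lemma amplitude_sq (s : ℝ) : amplitude s ^ 2 = speed s - 1 := by
  have hu : speed s ^ 2 = 1 + s ^ 2 := sq_sqrt (one_add_sq_pos s).le
  rw [amplitude, div_pow, sq_sqrt (speed_add_one_pos s).le,
    div_eq_iff (speed_add_one_pos s).ne']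
  linear_combination -hu

lemma contDiff_speed : ContDiff ℝ ∞ speed :=
  (contDiff_const.add (contDiff_id.pow 2)).sqrt fun x => (one_add_sq_pos x).ne'

lemma contDiff_amplitude : ContDiff ℝ ∞ amplitude :=
  contDiff_id.div ((contDiff_speed.add contDiff_const).sqrt fun s => (speed_add_one_pos s).ne')
    fun s => (sqrt_pos.mpr (speed_add_one_pos s)).ne'

lemma contDiff_sqrtPrimitive : ContDiff ℝ ∞ sqrtPrimitive :=
  (contDiff_id.mul ((contDiff_const.add (contDiff_id.pow 2)).sqrt
    fun x => (one_add_sq_pos x).ne')).add contDiff_arsinh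

lemma hasDerivAt_sqrtPrimitive (x : ℝ) : HasDerivAt sqrtPrimitive (2 * √(1 + x ^ 2)) x := by
  have hq : √(1 + x ^ 2) ^ 2 = 1 + x ^ 2 := sq_sqrt (one_add_sq_pos x).le
  have hq0 : √(1 + x ^ 2) ≠ 0 := (sqrt_pos.mpr (one_add_sq_pos x)).ne'
  have hsqrt : HasDerivAt (fun y => √(1 + y ^ 2)) (2 * x / (2 * √(1 + x ^ 2))) x := by
    simpa using ((hasDerivAt_pow 2 x).const_add 1).sqrt (one_add_sq_pos x).ne'
  refine (((hasDerivAt_id' x).mul hsqrt).add (hasDerivAt_arsinh x)).congr_deriv ?_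
  field_simp
  linear_combination -hq

lemma contDiff_Γ₁ : ContDiff ℝ ∞ (uncurry Γ₁) :=
  ((contDiff_speed.comp contDiff_fst).sub contDiff_const).mul
    ((contDiff_sin.comp (contDiff_const.mul contDiff_snd)).div_const 2)

lemma contDiff_Γ₂ : ContDiff ℝ ∞ (uncurry Γ₂) :=
  (contDiff_sqrtPrimitive.comp (contDiff_amplitude.comp contDiff_fst)).sub
    (contDiff_sqrtPrimitive.comp ((contDiff_amplitude.comp contDiff_fst).mul
      (contDiff_cos.comp contDiff_snd)))

lemma periodic_Γ₁ (s : ℝ) : Periodic (Γ₁ s) (2 * π) := fun t => by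
  rw [Γ₁, Γ₁, show 2 * (t + 2 * π) = 2 * t + 2 * π + 2 * π by ring, sin_add_two_pi, sin_add_two_pi]

lemma periodic_Γ₂ (s : ℝ) : Periodic (Γ₂ s) (2 * π) := fun t => by
  simp only [Γ₂, cos_add_two_pi]

lemma Γ₁_zero : Γ₁ 0 = 0 := by
  ext t; simp [Γ₁, speed]

lemma Γ₂_zero : Γ₂ 0 = 0 := by
  ext t; simp [Γ₂, amplitude]

lemma Γ₁_neg (s : ℝ) : Γ₁ (-s) = Γ₁ s := by
  ext t; simp only [Γ₁, speed, neg_sq]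

lemma hasDerivAt_Γ₁ (s t : ℝ) : HasDerivAt (Γ₁ s) ((speed s - 1) * cos (2 * t)) t := by
  refine ((((hasDerivAt_id' t).const_mul 2).sin.div_const 2).const_mul _).congr_deriv ?_
  ring

lemma hasDerivAt_Γ₂ (s t : ℝ) :
    HasDerivAt (Γ₂ s) (2 * √(1 + (amplitude s * cos t) ^ 2) * (amplitude s * sin t)) t := by
  refine ((hasDerivAt_const t _).sub ((hasDerivAt_sqrtPrimitive _).comp t
    ((hasDerivAt_cos t).const_mul (amplitude s)))).congr_deriv ?_
  ring

theorem eikonal (s t : ℝ) : (1 + deriv (Γ₁ s) t) ^ 2 + deriv (Γ₂ s) t ^ 2 = 1 + s ^ 2 := by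
  set w := amplitude s
  have hq : √(1 + (w * cos t) ^ 2) ^ 2 = 1 + (w * cos t) ^ 2 := sq_sqrt (by positivity)
  have hw : w ^ 2 = speed s - 1 := amplitude_sq s
  have hu : speed s ^ 2 = 1 + s ^ 2 := sq_sqrt (one_add_sq_pos s).le
  rw [(hasDerivAt_Γ₁ s t).deriv, (hasDerivAt_Γ₂ s t).deriv, cos_two_mul]
  linear_combination (4 * w ^ 2 * sin t ^ 2) * hq
    + (4 * w ^ 2 + 4 * w ^ 4 * cos t ^ 2) * sin_sq t
    + (4 * (1 - cos t ^ 2) + 4 * cos t ^ 2 * (1 - cos t ^ 2) * (w ^ 2 + (speed s - 1))) * hw + hu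

end Corrugation

open Corrugation

/-- **Corrugation profile (Lemma 2.3).** There are `δ* > 0` and smooth functions
`Γ₁, Γ₂` on `[0, δ*] × ℝ`, `2π`-periodic in `t`, with
`(1 + ∂ₜΓ₁)² + (∂ₜΓ₂)² = 1 + s²` and `|∂ₛ∂ₜᵏΓ₁| + |∂ₜᵏΓ₁| + |∂ₜᵏΓ₂| ≤ C(k) s`. -/
theorem corrugation_profile :
    ∃ δs : ℝ, 0 < δs ∧ ∃ Γ₁ Γ₂ : ℝ → ℝ → ℝ,
      ContDiff ℝ ∞ (Function.uncurry Γ₁) ∧ ContDiff ℝ ∞ (Function.uncurry Γ₂) ∧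
      (∀ s ∈ Icc (0 : ℝ) δs, ∀ t : ℝ,
        Γ₁ s (t + 2 * Real.pi) = Γ₁ s t ∧ Γ₂ s (t + 2 * Real.pi) = Γ₂ s t) ∧
      (∀ s ∈ Icc (0 : ℝ) δs, ∀ t : ℝ,
        (1 + deriv (Γ₁ s) t) ^ 2 + (deriv (Γ₂ s) t) ^ 2 = 1 + s ^ 2) ∧
      ∀ k : ℕ, ∃ C : ℝ, 0 < C ∧ ∀ s ∈ Icc (0 : ℝ) δs, ∀ t : ℝ,
        |deriv (fun s' => iteratedDeriv k (fun t' => Γ₁ s' t') t) s| +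
          |iteratedDeriv k (fun t' => Γ₁ s t') t| +
          |iteratedDeriv k (fun t' => Γ₂ s t') t| ≤ C * s := by
  refine ⟨1, one_pos, Γ₁, Γ₂, contDiff_Γ₁, contDiff_Γ₂,
    fun s _ t => ⟨periodic_Γ₁ s t, periodic_Γ₂ s t⟩, fun s _ t => eikonal s t, fun k => ?_⟩
  obtain ⟨C₀, hC₀, h₀⟩ :=
    exists_abs_deriv_iteratedDeriv_le_mul contDiff_Γ₁ two_pi_pos periodic_Γ₁ Γ₁_neg k 1
  obtain ⟨C₁, hC₁, h₁⟩ :=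
    exists_abs_iteratedDeriv_le_mul contDiff_Γ₁ two_pi_pos periodic_Γ₁ Γ₁_zero k 1
  obtain ⟨C₂, hC₂, h₂⟩ :=
    exists_abs_iteratedDeriv_le_mul contDiff_Γ₂ two_pi_pos periodic_Γ₂ Γ₂_zero k 1
  refine ⟨C₀ + C₁ + C₂, by positivity, fun s hs t => ?_⟩
  simpa only [add_mul] using add_le_add (add_le_add (h₀ s hs t) (h₁ s hs t)) (h₂ s hs t)
end
end

section
/- [Algebraic corrugation identity] Let n ≥ 1, B a real (n+1)×n matrix, ν ∈ ℝⁿ, κ > 0, and ξ, ζ ∈ ℝ^{n+1} satisfy Bᵀξ = κ ν, Bᵀζ = 0, |ξ|² = |ζ|² = κ, and ξ · ζ = 0. Then for any real numbers c₁, c₂, the matrix A = c₁ ξ⊗ν + c₂ ζ⊗ν (where v⊗w denotes the (n+1)×n matrix v wᵀ for v ∈ ℝ^{n+1}, w ∈ ℝⁿ) satisfies BᵀA + AᵀB + AᵀA = κ ((1 + c₁)² + c₂² − 1) ν⊗ν, where on the right ν⊗ν = ν νᵀ is n×n. In particular, if (1 + c₁)² + c₂² = 1 + s² then (B + A)ᵀ(B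 + A) = BᵀB + κ s² ν⊗ν. -/
open Matrix

/-
`A` is the rank-one matrix `w ⊗ ν` with `w = c₁ ξ + c₂ ζ`. Then `Bᵀ A = (Bᵀ w) ⊗ ν` and
`Aᵀ A = (w · w) ν ⊗ ν`, and the hypotheses give `Bᵀ w = c₁ κ ν` and
`w · w = κ (c₁² + c₂²)`, so all three terms are multiples of `ν ⊗ ν` with total coefficient
`κ (2 c₁ + c₁² + c₂²) = κ ((1 + c₁)² + c₂² − 1)`.
-/

section

variable {m n α : Type*} [Fintype m] [CommRing α]

lemma transpose_add_mul_self (B A : Matrix m n α) :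
    (B + A)ᵀ * (B + A) = Bᵀ * B + (Bᵀ * A + Aᵀ * B + Aᵀ * A) := by
  simp only [transpose_add, Matrix.add_mul, Matrix.mul_add]
  abel

lemma vecMulVec_transpose_mul_self (w : m → α) (v : n → α) :
    (vecMulVec w v)ᵀ * vecMulVec w v = (w ⬝ᵥ w) • vecMulVec v v := by
  rw [transpose_vecMulVec, vecMulVec_mul_vecMulVec, vecMulVec_smul]

lemma transpose_mul_vecMulVec_of_mulVec_eq {M : Matrix m n α} {w : m → α} {v : n → α}
    {a : α} (h : Mᵀ *ᵥ w = a • v) : Mᵀ * vecMulVec w v = a • vecMulVec v v := by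
  rw [mul_vecMulVec, h, smul_vecMulVec]

lemma transpose_mul_add_transpose_mul_add_self_of_mulVec_eq {M : Matrix m n α} {w : m → α}
    {v : n → α} {a : α} (h : Mᵀ *ᵥ w = a • v) :
    Mᵀ * vecMulVec w v + (vecMulVec w v)ᵀ * M + (vecMulVec w v)ᵀ * vecMulVec w v =
      (2 * a + w ⬝ᵥ w) • vecMulVec v v := by
  have hMA := transpose_mul_vecMulVec_of_mulVec_eq h
  have hAM : (vecMulVec w v)ᵀ * M = a • vecMulVec v v := by
    rw [← transpose_transpose M, ← transpose_mul, hMA, transpose_smul, transpose_vecMulVec]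
  rw [hMA, hAM, vecMulVec_transpose_mul_self, ← add_smul, ← add_smul, two_mul]

end

theorem corrugation_algebra_general (n : ℕ)
    (B : Matrix (Fin (n + 1)) (Fin n) ℝ) (ν : Fin n → ℝ) (κ : ℝ)
    (ξ ζ : Fin (n + 1) → ℝ)
    (hξ : Bᵀ.mulVec ξ = κ • ν) (hζ : Bᵀ.mulVec ζ = 0)
    (hξn : ξ ⬝ᵥ ξ = κ) (hζn : ζ ⬝ᵥ ζ = κ) (horth : ξ ⬝ᵥ ζ = 0)
    (c₁ c₂ : ℝ) (A : Matrix (Fin (n + 1)) (Fin n) ℝ)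
    (hA : A = c₁ • vecMulVec ξ ν + c₂ • vecMulVec ζ ν) :
    Bᵀ * A + Aᵀ * B + Aᵀ * A =
      (κ * ((1 + c₁) ^ 2 + c₂ ^ 2 - 1)) • vecMulVec ν ν ∧
    ∀ s : ℝ, (1 + c₁) ^ 2 + c₂ ^ 2 = 1 + s ^ 2 →
      (B + A)ᵀ * (B + A) = Bᵀ * B + (κ * s ^ 2) • vecMulVec ν ν := by
  set w := c₁ • ξ + c₂ • ζ
  have hAw : A = vecMulVec w ν := by
    rw [hA, add_vecMulVec, smul_vecMulVec, smul_vecMulVec]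
  have hBw : Bᵀ *ᵥ w = (c₁ * κ) • ν := by
    rw [mulVec_add, mulVec_smul, mulVec_smul, hξ, hζ, smul_zero, add_zero, smul_smul]
  have hww : w ⬝ᵥ w = κ * (c₁ ^ 2 + c₂ ^ 2) := by
    simp only [w, add_dotProduct, dotProduct_add, smul_dotProduct, dotProduct_smul,
      dotProduct_comm ζ ξ, hξn, hζn, horth, smul_eq_mul]
    ring
  have key : Bᵀ * A + Aᵀ * B + Aᵀ * A =
      (κ * ((1 + c₁) ^ 2 + c₂ ^ 2 - 1)) • vecMulVec ν ν := by
    rw [hAw, transpose_mul_add_transpose_mul_add_self_of_mulVec_eq hBw, hww]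
    congr 1
    ring
  refine ⟨key, fun s hs => ?_⟩
  rw [transpose_add_mul_self, key, hs, add_sub_cancel_left]

/-- **Algebraic corrugation identity.** If `Bᵀξ = κν`, `Bᵀζ = 0`, `|ξ|² = |ζ|² = κ`
and `ξ ⊥ ζ`, then `A = c₁ ξ⊗ν + c₂ ζ⊗ν` satisfies
`BᵀA + AᵀB + AᵀA = κ((1+c₁)² + c₂² − 1) ν⊗ν`; in particular if
`(1+c₁)² + c₂² = 1 + s²` then `(B+A)ᵀ(B+A) = BᵀB + κs² ν⊗ν`. -/
theorem corrugation_algebra (n : ℕ) (hn : 1 ≤ n)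
    (B : Matrix (Fin (n + 1)) (Fin n) ℝ) (ν : Fin n → ℝ) (κ : ℝ) (hκ : 0 < κ)
    (ξ ζ : Fin (n + 1) → ℝ)
    (hξ : Bᵀ.mulVec ξ = κ • ν) (hζ : Bᵀ.mulVec ζ = 0)
    (hξn : ξ ⬝ᵥ ξ = κ) (hζn : ζ ⬝ᵥ ζ = κ) (horth : ξ ⬝ᵥ ζ = 0)
    (c₁ c₂ : ℝ) (A : Matrix (Fin (n + 1)) (Fin n) ℝ)
    (hA : A = c₁ • vecMulVec ξ ν + c₂ • vecMulVec ζ ν) :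
    Bᵀ * A + Aᵀ * B + Aᵀ * A =
      (κ * ((1 + c₁) ^ 2 + c₂ ^ 2 - 1)) • vecMulVec ν ν ∧
    ∀ s : ℝ, (1 + c₁) ^ 2 + c₂ ^ 2 = 1 + s ^ 2 →
      (B + A)ᵀ * (B + A) = Bᵀ * B + (κ * s ^ 2) • vecMulVec ν ν :=
  corrugation_algebra_general n B ν κ ξ ζ hξ hζ hξn hζn horth c₁ c₂ A hA
end
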